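/- arXiv:2204.07825 — 3 statements merged into one kernel-verified Lean document; each statement's English description precedes it below -/
import Mathlib

section
/- Let a, b, d be real numbers, let m ≥ 2 be an integer, let ω = exp(2πi/m), and define f : ℂ → ℂ by f(z) = (a + b·z·conj(z))·z + d·(conj z)^(m−1). Let q ∈ (0,1), let w(n,k) = Γ(n−k+q)/(Γ(q)·Γ(n−k+1)) for 1 ≤ k ≤ n (Γ the real Gamma function), and let z₀ ∈ ℂ with Im(z₀) ≠ 0. For a sequence z : ℕ → ℂ and n ≥ 1, define the fractional-order time-n map Φ_n(z) = z₀ + Σ_{k=1}^{n} w(n,k)·f(z(k−1)). Then Φ_n fails rotation equivariance: for every sequence z : ℕ → ℂ and every n ≥ 1, Φ_n(ω·z) − ω·Φ_n(z) = z₀ − ω·z₀ ≠ 0, hence Φ_n(ω·z) ≠ ω·Φ_n(z). In particular, the fractional-order dihedral logistic map has no dihedral symmetry. -/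
open Complex ComplexConjugate Finset

/-- The Caputo fractional-order time-`n` map of the dihedral logistic map,
`Φ_n(z) = z₀ + Σ_{k=1}^n w(n,k)·f(z(k-1))`, fails rotation equivariance whenever
`Im z₀ ≠ 0`: `Φ_n(ω·z) - ω·Φ_n(z) = z₀ - ω·z₀ ≠ 0`. In particular the
fractional-order dihedral logistic map has no dihedral symmetry. -/
theorem fo_dihedral_logistic_rotation_broken
    (a b d : ℝ) (m : ℕ) (hm : 2 ≤ m) (ω : ℂ)
    (hω : ω = Complex.exp (2 * Real.pi * Complex.I / m)) (f : ℂ → ℂ)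
    (hf : ∀ z : ℂ, f z = ((a : ℂ) + (b : ℂ) * z * conj z) * z + (d : ℂ) * (conj z) ^ (m - 1))
    (q : ℝ) (hq : q ∈ Set.Ioo (0 : ℝ) 1)
    (w : ℕ → ℕ → ℝ)
    (hw : ∀ n k : ℕ, 1 ≤ k → k ≤ n →
      w n k = Real.Gamma (((n - k : ℕ) : ℝ) + q) /
        (Real.Gamma q * Real.Gamma (((n - k : ℕ) : ℝ) + 1)))
    (z₀ : ℂ) (hz₀ : z₀.im ≠ 0)
    (Φ : ℕ → (ℕ → ℂ) → ℂ)
    (hΦ : ∀ (n : ℕ) (z : ℕ → ℂ),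
      Φ n z = z₀ + ∑ k ∈ Finset.Icc 1 n, (w n k : ℂ) * f (z (k - 1))) :
    ∀ (z : ℕ → ℂ) (n : ℕ), 1 ≤ n →
      Φ n (fun k => ω * z k) - ω * Φ n z = z₀ - ω * z₀ ∧
      z₀ - ω * z₀ ≠ 0 ∧
      Φ n (fun k => ω * z k) ≠ ω * Φ n z := by
  have hm0 : (m : ℂ) ≠ 0 := by
    exact_mod_cast Nat.cast_ne_zero.mpr (by omega)
  -- ω^m = 1
  have hωm : ω ^ m = 1 := by
    rw [hω, ← Complex.exp_nat_mul]
    rw [show (m : ℂ) * (2 * Real.pi * Complex.I / m) = 2 * Real.pi * Complex.I by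
      field_simp]
    exact Complex.exp_two_pi_mul_I
  have hω0 : ω ≠ 0 := hω ▸ Complex.exp_ne_zero _
  -- conj ω * ω = 1
  have hconj : (conj ω) * ω = 1 := by
    rw [hω, ← Complex.exp_conj, ← Complex.exp_add]
    rw [show (starRingEnd ℂ) (2 * Real.pi * Complex.I / m) +
        2 * Real.pi * Complex.I / m = 0 by
      simp [map_div₀, Complex.conj_I, map_ofNat]; ring]
    exact Complex.exp_zero
  -- conj ω ^ (m-1) = ω
  have hpow : (conj ω) ^ (m - 1) = ω := by
    have h2 : (conj ω) = ω⁻¹ := eq_inv_of_mul_eq_one_left hconj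
    have h3 : ω ^ (m - 1) = ω⁻¹ := by
      apply eq_inv_of_mul_eq_one_left
      rw [← pow_succ, Nat.sub_add_cancel (by omega) ]
      · exact hωm
    rw [h2, inv_pow, h3, inv_inv]
  -- ω ≠ 1
  have hω1 : ω ≠ 1 := by
    intro h
    rw [hω, Complex.exp_eq_one_iff] at h
    obtain ⟨n, hn⟩ := h
    have h2πI : (2 : ℂ) * Real.pi * Complex.I ≠ 0 := by
      simp [Real.pi_ne_zero, Complex.I_ne_zero]
    have : (n : ℂ) * m = 1 := by
      have h' := hn
      field_simp at h'
      have h'' : ((n : ℂ) * m) * (2 * Real.pi * Complex.I) =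
          1 * (2 * Real.pi * Complex.I) := by linear_combination (-(2 * Real.pi * Complex.I)) * h'
      exact mul_right_cancel₀ h2πI h''
    have : ((n * m : ℤ) : ℂ) = ((1 : ℤ) : ℂ) := by push_cast; linear_combination this
    have hnm : n * m = 1 := by exact_mod_cast this
    have : (m : ℤ) ≤ 1 := Int.le_of_dvd one_pos ⟨n, by linarith⟩
    omega
  -- equivariance of f
  have key : ∀ u : ℂ, f (ω * u) = ω * f u := by
    intro u
    rw [hf, hf, map_mul, mul_pow, hpow]
    ring_nf
    linear_combination (b * ω * u ^ 2 * conj u) * hconj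
  intro z n hn
  have main : Φ n (fun k => ω * z k) - ω * Φ n z = z₀ - ω * z₀ := by
    rw [hΦ, hΦ]
    simp only [key]
    have hs : ∑ k ∈ Finset.Icc 1 n, (w n k : ℂ) * (ω * f (z (k - 1))) =
        ω * ∑ k ∈ Finset.Icc 1 n, (w n k : ℂ) * f (z (k - 1)) := by
      rw [Finset.mul_sum]; exact Finset.sum_congr rfl fun k _ => by ring
    rw [hs]; ring
  have hz0 : z₀ ≠ 0 := fun h => hz₀ (by simp [h])
  have hne : z₀ - ω * z₀ ≠ 0 := by
    intro h
    apply hω1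
    have : (1 - ω) * z₀ = 0 := by linear_combination h
    rcases mul_eq_zero.mp this with h' | h'
    · linear_combination -h'
    · exact absurd h' hz0
  refine ⟨main, hne, fun h => hne ?_⟩
  rw [← main, h, sub_self]
end

section
/- Let f : ℂ → ℂ be any map, let ω ∈ ℂ with ω ≠ 1, and suppose f(ω·w) = ω·f(w) for all w ∈ ℂ. Let q ∈ (0,1), let w(n,k) = Γ(n−k+q)/(Γ(q)·Γ(n−k+1)) for 1 ≤ k ≤ n (Γ the real Gamma function), and let z₀ ∈ ℂ with z₀ ≠ 0. For a sequence z : ℕ → ℂ and n ≥ 1, define Φ_n(z) = z₀ + Σ_{k=1}^{n} w(n,k)·f(z(k−1)). Then for every sequence z : ℕ → ℂ and every n ≥ 1, Φ_n(ω·z) − ω·Φ_n(z) = (1 − ω)·z₀ ≠ 0; that is, the Caputo fractional-order variant of any rotation-equivariant map fails rotation equivariance whenever z₀ ≠ 0. -/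
/-! The memory sum of the fractional variant is a linear combination of the values `f (z (k - 1))`,
so it inherits the equivariance of `f`; only the constant initial term `z₀` is not rotated. -/

open Complex ComplexConjugate Finset

theorem Finset.sum_mul_apply_mul_eq_mul_sum_of_equivariant {R ι : Type*} [CommSemiring R]
    (s : Finset ι) (a x : ι → R) (f : R → R) (ω : R) (hf : ∀ y, f (ω * y) = ω * f y) :
    ∑ k ∈ s, a k * f (ω * x k) = ω * ∑ k ∈ s, a k * f (x k) := by
  rw [Finset.mul_sum]
  exact Finset.sum_congr rfl fun k _ => by rw [hf, mul_left_comm]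

theorem fo_rotation_equivariance_broken_general
    (f : ℂ → ℂ) (ω : ℂ) (hω : ω ≠ 1) (hf : ∀ z : ℂ, f (ω * z) = ω * f z)
    (w : ℕ → ℕ → ℝ)
    (z₀ : ℂ) (hz₀ : z₀ ≠ 0)
    (Φ : ℕ → (ℕ → ℂ) → ℂ)
    (hΦ : ∀ (n : ℕ) (z : ℕ → ℂ),
      Φ n z = z₀ + ∑ k ∈ Finset.Icc 1 n, (w n k : ℂ) * f (z (k - 1))) :
    ∀ (z : ℕ → ℂ) (n : ℕ), 1 ≤ n →
      Φ n (fun k => ω * z k) - ω * Φ n z = (1 - ω) * z₀ ∧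
      (1 - ω) * z₀ ≠ 0 := by
  intro z n _
  refine ⟨?_, mul_ne_zero (sub_ne_zero.2 hω.symm) hz₀⟩
  rw [hΦ, hΦ, Finset.sum_mul_apply_mul_eq_mul_sum_of_equivariant _ (fun k => (w n k : ℂ))
    (fun k => z (k - 1)) f ω hf]
  ring

/-- The Caputo fractional-order variant of any `ω`-rotation-equivariant map
(`ω ≠ 1`) fails rotation equivariance whenever `z₀ ≠ 0`:
`Φ_n(ω·z) - ω·Φ_n(z) = (1 - ω)·z₀ ≠ 0`. -/
theorem fo_rotation_equivariance_broken
    (f : ℂ → ℂ) (ω : ℂ) (hω : ω ≠ 1) (hf : ∀ z : ℂ, f (ω * z) = ω * f z)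
    (q : ℝ) (hq : q ∈ Set.Ioo (0 : ℝ) 1)
    (w : ℕ → ℕ → ℝ)
    (hw : ∀ n k : ℕ, 1 ≤ k → k ≤ n →
      w n k = Real.Gamma (((n - k : ℕ) : ℝ) + q) /
        (Real.Gamma q * Real.Gamma (((n - k : ℕ) : ℝ) + 1)))
    (z₀ : ℂ) (hz₀ : z₀ ≠ 0)
    (Φ : ℕ → (ℕ → ℂ) → ℂ)
    (hΦ : ∀ (n : ℕ) (z : ℕ → ℂ),
      Φ n z = z₀ + ∑ k ∈ Finset.Icc 1 n, (w n k : ℂ) * f (z (k - 1))) :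
    ∀ (z : ℕ → ℂ) (n : ℕ), 1 ≤ n →
      Φ n (fun k => ω * z k) - ω * Φ n z = (1 - ω) * z₀ ∧
      (1 - ω) * z₀ ≠ 0 :=
  fo_rotation_equivariance_broken_general f ω hω hf w z₀ hz₀ Φ hΦ
end

section
/- Let a, b, c, d be real numbers, let m ≥ 2 be an integer, let ω = exp(2πi/m), and define g : ℂ → ℂ by g(z) = (a + b·z·conj(z) + c·i)·z + d·(conj z)^(m−1). Let q ∈ (0,1), let w(n,k) = Γ(n−k+q)/(Γ(q)·Γ(n−k+1)) for 1 ≤ k ≤ n (Γ the real Gamma function), and let z₀ ∈ ℂ with Im(z₀) ≠ 0. For a sequence z : ℕ → ℂ and n ≥ 1, define Φ_n(z) = z₀ + Σ_{k=1}^{n} w(n,k)·g(z(k−1)). Then for every sequence z : ℕ → ℂ and every n ≥ 1, Φ_n(ω·z) − ω·Φ_n(z) = z₀ − ω·z₀ ≠ 0; that is, the fractional-order cyclic logistic map has no cyclic symmetry. -/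
open Complex ComplexConjugate Finset

/-- The Caputo fractional-order variant of the cyclic logistic map fails rotation
equivariance whenever `Im z₀ ≠ 0`: `Φ_n(ω·z) - ω·Φ_n(z) = z₀ - ω·z₀ ≠ 0`; that is,
the fractional-order cyclic logistic map has no cyclic symmetry. -/
theorem fo_cyclic_logistic_rotation_broken
    (a b c d : ℝ) (m : ℕ) (hm : 2 ≤ m) (ω : ℂ)
    (hω : ω = Complex.exp (2 * Real.pi * Complex.I / m)) (g : ℂ → ℂ)
    (hg : ∀ z : ℂ, g z = ((a : ℂ) + (b : ℂ) * z * conj z + (c : ℂ) * Complex.I) * z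
        + (d : ℂ) * (conj z) ^ (m - 1))
    (q : ℝ) (hq : q ∈ Set.Ioo (0 : ℝ) 1)
    (w : ℕ → ℕ → ℝ)
    (hw : ∀ n k : ℕ, 1 ≤ k → k ≤ n →
      w n k = Real.Gamma (((n - k : ℕ) : ℝ) + q) /
        (Real.Gamma q * Real.Gamma (((n - k : ℕ) : ℝ) + 1)))
    (z₀ : ℂ) (hz₀ : z₀.im ≠ 0)
    (Φ : ℕ → (ℕ → ℂ) → ℂ)
    (hΦ : ∀ (n : ℕ) (z : ℕ → ℂ),
      Φ n z = z₀ + ∑ k ∈ Finset.Icc 1 n, (w n k : ℂ) * g (z (k - 1))) :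
    ∀ (z : ℕ → ℂ) (n : ℕ), 1 ≤ n →
      Φ n (fun k => ω * z k) - ω * Φ n z = z₀ - ω * z₀ ∧
      z₀ - ω * z₀ ≠ 0 := by
  have hm0 : (m : ℂ) ≠ 0 := Nat.cast_ne_zero.mpr (by omega)
  have hωm : ω ^ m = 1 := by
    rw [hω, ← Complex.exp_nat_mul]
    rw [mul_div_cancel₀ _ hm0]
    simpa [mul_comm] using Complex.exp_two_pi_mul_I
  have hωne : ω ≠ 0 := by
    rw [hω]; exact Complex.exp_ne_zero _
  have hconj : conj ω = ω⁻¹ := by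
    rw [hω, ← Complex.exp_conj]
    have : conj (2 * (Real.pi : ℂ) * Complex.I / m) =
        -(2 * (Real.pi : ℂ) * Complex.I / m) := by
      simp only [map_div₀, map_mul, Complex.conj_I, map_ofNat,
        Complex.conj_ofReal, Complex.conj_natCast]
      ring
    rw [this, Complex.exp_neg]
  have hωm1 : ω ^ (m - 1) = ω⁻¹ := by
    have : ω ^ (m - 1) * ω = 1 := by
      rw [← pow_succ, Nat.sub_add_cancel (le_trans (by norm_num) hm), hωm]
    field_simp at this ⊢
    linear_combination this
  have hconjpow : (conj ω) ^ (m - 1) = ω := by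
    rw [hconj, inv_pow, hωm1, inv_inv]
  have hgeq : ∀ z : ℂ, g (ω * z) = ω * g z := by
    intro z
    rw [hg, hg]
    simp only [map_mul]
    have h1 : ω * conj ω = 1 := by
      rw [hconj, mul_inv_cancel₀ hωne]
    have h2 : (conj ω * conj z) ^ (m - 1) = ω * (conj z) ^ (m - 1) := by
      rw [mul_pow, hconjpow]
    rw [h2]
    linear_combination ((b:ℂ) * ω * z ^ 2 * conj z) * h1
  intro z n hn
  constructor
  · rw [hΦ, hΦ]
    rw [mul_add, Finset.mul_sum]
    have : ∀ k ∈ Finset.Icc 1 n, (w n k : ℂ) * g (ω * z (k - 1)) =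
        ω * ((w n k : ℂ) * g (z (k - 1))) := by
      intro k _
      rw [hgeq]; ring
    rw [Finset.sum_congr rfl this]
    ring
  · have hz₀ne : z₀ ≠ 0 := fun h => hz₀ (by simp [h])
    have hω1 : ω ≠ 1 := by
      intro h
      rw [h] at hω
      obtain ⟨k, hk⟩ := Complex.exp_eq_one_iff.mp hω.symm
      have h2πI : (2 : ℂ) * Real.pi * Complex.I ≠ 0 := by
        simp [Real.pi_ne_zero, Complex.I_ne_zero]
      have hkm : (1 : ℂ) = (k : ℂ) * m := by
        field_simp at hk
        exact mul_right_cancel₀ h2πI (by linear_combination (2 * (Real.pi : ℂ) * Complex.I) * hk)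
      have hre : (1 : ℝ) = (k : ℝ) * m := by exact_mod_cast hkm
      have hZ : (1 : ℤ) = k * m := by exact_mod_cast hre
      have hdvd : (m : ℤ) ∣ 1 := ⟨k, by linarith⟩
      have := Int.le_of_dvd one_pos hdvd
      omega
    intro h
    have : (1 - ω) * z₀ = 0 := by linear_combination h
    rcases mul_eq_zero.mp this with h' | h'
    · exact hω1 (by linear_combination -h')
    · exact hz₀ne h'
end
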